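/- Let n ≥ 1, let q₁, …, q_n : ℝ × ℝ → ℂ be twice continuously differentiable in (x,t), and let λ be a nonzero complex number. Define pointwise the 2^{n−1} × 2^{n−1} matrices Q = Q⁽ⁿ⁾ and R = R⁽ⁿ⁾ by the recursion Q⁽¹⁾ = (q₁), R⁽¹⁾ = (conj(q₁)), Q⁽ᵏ⁺¹⁾ = fromBlocks(Q⁽ᵏ⁾, q_{k+1} I; −conj(q_{k+1}) I, R⁽ᵏ⁾), R⁽ᵏ⁺¹⁾ = fromBlocks(R⁽ᵏ⁾, −q_{k+1} I; conj(q_{k+1}) I, Q⁽ᵏ⁾), and define the 2^n × 2^n block matrices U = λ·fromBlocks(I, Q_x; R_x, −I) and V = fromBlocks(−(λ/2)QR − (1/(4λ))I, −(λ/2)QRQ_x + (1/2)Q; −(λ/2)RQR_x − (1/2)R, (λ/2)QR + (1/(4λ))I). Then at every point (x,t), the zero-curvature equation U_t − V_x + U·V − V·U = 0 holds if and only if q_{i,xt} + q_i + (1/2)((Σ_{j=1}^{n}|q_j|²) q_{i,x})_x = 0 holds at that point for every i = 1, …, n. -/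

import Mathlib

open Complex Matrix

/-- Partial derivative in the first (space) variable. -/
noncomputable def pdx (F : ℝ → ℝ → ℂ) (x t : ℝ) : ℂ := deriv (fun x' => F x' t) x

/-- Partial derivative in the second (time) variable. -/
noncomputable def pdt (F : ℝ → ℝ → ℂ) (x t : ℝ) : ℂ := deriv (fun t' => F x t') t

/-- Entrywise partial derivative in the first variable of a matrix-valued function. -/
noncomputable def pdxM {ι : Type*} (F : ℝ → ℝ → Matrix ι ι ℂ) (x t : ℝ) :
    Matrix ι ι ℂ := Matrix.of fun i j => deriv (fun x' => F x' t i j) x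

/-- Entrywise partial derivative in the second variable of a matrix-valued function. -/
noncomputable def pdtM {ι : Type*} (F : ℝ → ℝ → Matrix ι ι ℂ) (x t : ℝ) :
    Matrix ι ι ℂ := Matrix.of fun i j => deriv (fun t' => F x t' i j) t

/-- The equivalence `Fin (2^k) ⊕ Fin (2^k) ≃ Fin (2^(k+1))` used to reindex block matrices. -/
def blockEquiv (k : ℕ) : Fin (2^k) ⊕ Fin (2^k) ≃ Fin (2^(k+1)) :=
  finSumFinEquiv.trans (finCongr (by ring))

/-- The pair `(Q⁽ᵏ⁺¹⁾, R⁽ᵏ⁺¹⁾)` of `2^k × 2^k` matrices built recursively from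
`q 1, …, q (k+1)`. -/
noncomputable def QRmat (q : ℕ → ℂ) : (k : ℕ) →
    Matrix (Fin (2^k)) (Fin (2^k)) ℂ × Matrix (Fin (2^k)) (Fin (2^k)) ℂ
  | 0 => (Matrix.of fun _ _ => q 1, Matrix.of fun _ _ => starRingEnd ℂ (q 1))
  | k+1 =>
    ((Matrix.reindex (blockEquiv k) (blockEquiv k))
        (Matrix.fromBlocks (QRmat q k).1
          (q (k+2) • (1 : Matrix (Fin (2^k)) (Fin (2^k)) ℂ))
          ((-(starRingEnd ℂ (q (k+2)))) • (1 : Matrix (Fin (2^k)) (Fin (2^k)) ℂ))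
          (QRmat q k).2),
     (Matrix.reindex (blockEquiv k) (blockEquiv k))
        (Matrix.fromBlocks (QRmat q k).2
          ((-(q (k+2))) • (1 : Matrix (Fin (2^k)) (Fin (2^k)) ℂ))
          ((starRingEnd ℂ (q (k+2))) • (1 : Matrix (Fin (2^k)) (Fin (2^k)) ℂ))
          (QRmat q k).1))


/-!
The recursion makes `Q` and `R` a Clifford-type pair: `Q R = R Q = σ I` with `σ = ∑ |q_j|²`.
Differentiating gives `Q_x R + Q R_x = R_x Q + R Q_x = σ_x I`, and these two identities collapse the
zero-curvature matrix `U_t − V_x + [U, V]` to `λ · fromBlocks(0, E Q; E R, 0)`, where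
`E f = f_xt + f + ½ (σ f_x)_x` acts entrywise. Every entry of `Q` and `R` is a constant multiple
of some `q_m` or of its conjugate, and each `q_m` is an entry of `Q`. As `E` is `ℂ`-linear and
commutes with conjugation (`σ` is real), `E Q = E R = 0` holds iff `E q_m = 0` for all `m`.
-/

open Finset Function ComplexConjugate

section PartialDerivatives

variable {F : ℝ → ℝ → ℂ} {x t : ℝ}

lemma differentiableAt_slice_left (hF : DifferentiableAt ℝ (uncurry F) (x, t)) :
    DifferentiableAt ℝ (fun x' => F x' t) x :=
  DifferentiableAt.comp (g := uncurry F) (f := fun x' => (x', t)) x hF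
    (differentiableAt_id.prodMk (differentiableAt_const t))

lemma pdx_eq_fderiv (hF : DifferentiableAt ℝ (uncurry F) (x, t)) :
    pdx F x t = fderiv ℝ (uncurry F) (x, t) (1, 0) :=
  (HasFDerivAt.comp_hasDerivAt (l := uncurry F) x hF.hasFDerivAt
    ((hasDerivAt_id x).prodMk (hasDerivAt_const x t))).deriv

lemma ContDiff.differentiable_pdx (hF : ContDiff ℝ 2 (uncurry F)) :
    Differentiable ℝ (uncurry (pdx F)) := by
  have hF' : ContDiff ℝ 1 (fderiv ℝ (uncurry F)) := hF.fderiv_right (by norm_num)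
  have hpdx : uncurry (pdx F) =
      ContinuousLinearMap.apply ℝ ℂ ((1 : ℝ), (0 : ℝ)) ∘ fderiv ℝ (uncurry F) :=
    funext fun p => pdx_eq_fderiv (hF.differentiable (by norm_num) p)
  rw [hpdx]
  exact ((ContinuousLinearMap.apply ℝ ℂ _).contDiff.comp hF').differentiable one_ne_zero

lemma pdx_conj (F : ℝ → ℝ → ℂ) :
    pdx (fun x t => conj (F x t)) = fun x t => conj (pdx F x t) :=
  funext₂ fun _ _ => deriv.star

lemma pdt_conj (F : ℝ → ℝ → ℂ) :
    pdt (fun x t => conj (F x t)) = fun x t => conj (pdt F x t) :=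
  funext₂ fun _ _ => deriv.star

end PartialDerivatives

section MatrixPartialDerivatives

variable {ι : Type*}

theorem pdxM_mul [Fintype ι] {A B : ℝ → ℝ → Matrix ι ι ℂ} {x t : ℝ}
    (hA : ∀ i j, DifferentiableAt ℝ (fun x' => A x' t i j) x)
    (hB : ∀ i j, DifferentiableAt ℝ (fun x' => B x' t i j) x) :
    pdxM (fun x t => A x t * B x t) x t = pdxM A x t * B x t + A x t * pdxM B x t := by
  ext i j
  simp only [pdxM, of_apply, Matrix.add_apply, mul_apply, ← sum_add_distrib]
  exact (HasDerivAt.fun_sum fun l _ => (hA i l).hasDerivAt.fun_mul (hB l j).hasDerivAt).deriv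

theorem pdxM_smul_one [DecidableEq ι] (σ : ℝ → ℝ → ℂ) (x t : ℝ) :
    pdxM (fun x t => σ x t • (1 : Matrix ι ι ℂ)) x t = pdx σ x t • 1 := by
  ext i j
  exact congrFun (deriv_mul_const_field' _) x

end MatrixPartialDerivatives

section CSPOperator

/-- `cspOperator |q|² q_i = 0` is the `i`-th component of the vector complex short pulse
equation. -/
noncomputable def cspOperator (σ f : ℝ → ℝ → ℂ) (x t : ℝ) : ℂ :=
  pdt (pdx f) x t + f x t + (1/2) * pdx (fun x' t' => σ x' t' * pdx f x' t') x t

lemma cspOperator_const_mul (σ f : ℝ → ℝ → ℂ) (c : ℂ) (x t : ℝ) :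
    cspOperator σ (fun x t => c * f x t) x t = c * cspOperator σ f x t := by
  have hpdx (g : ℝ → ℝ → ℂ) : pdx (fun x t => c * g x t) = fun x t => c * pdx g x t :=
    funext₂ fun x _ => congrFun (deriv_const_mul_field' c) x
  have hpdt : pdt (fun x t => c * pdx f x t) x t = c * pdt (pdx f) x t :=
    congrFun (deriv_const_mul_field' c) t
  simp only [cspOperator, hpdx, hpdt, mul_left_comm (σ _ _) c]
  ring

lemma cspOperator_conj {σ : ℝ → ℝ → ℂ} (hσ : ∀ x t, conj (σ x t) = σ x t)
    (f : ℝ → ℝ → ℂ) (x t : ℝ) :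
    cspOperator σ (fun x t => conj (f x t)) x t = conj (cspOperator σ f x t) := by
  have hσf : (fun x t => σ x t * conj (pdx f x t)) = fun x t => conj (σ x t * pdx f x t) := by
    simp only [map_mul, hσ]
  simp only [cspOperator, pdx_conj, pdt_conj]
  rw [hσf, pdx_conj]
  simp only [map_add, map_mul, map_div₀, map_one, map_ofNat]

lemma of_cspOperator {ι : Type*} (σ : ℝ → ℝ → ℂ) (Q : ℝ → ℝ → Matrix ι ι ℂ) (x t : ℝ) :
    (of fun i j => cspOperator σ (fun x t => Q x t i j) x t) =
      pdtM (pdxM Q) x t + Q x t + (1/2 : ℂ) • pdxM (fun x t => σ x t • pdxM Q x t) x t :=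
  rfl

end CSPOperator

section QRMatrices

lemma fromBlocks_mul_fromBlocks_eq_smul_one {ι R : Type*} [Fintype ι] [DecidableEq ι]
    [CommRing R] {A B : Matrix ι ι R} {s : R} (hAB : A * B = s • 1) (hBA : B * A = s • 1)
    (u v : R) :
    fromBlocks A (u • 1) (-v • 1) B * fromBlocks B (-u • 1) (v • 1) A = (s + u * v) • 1 := by
  rw [fromBlocks_multiply, hAB, hBA, ← fromBlocks_one, fromBlocks_smul]
  congr 1 <;> simp only [Matrix.smul_mul, Matrix.mul_smul, Matrix.one_mul, Matrix.mul_one,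
    smul_smul, smul_zero] <;> module

lemma QRmat_succ_apply (q : ℕ → ℂ) (k : ℕ) (a b : Fin (2^k) ⊕ Fin (2^k)) :
    (QRmat q (k+1)).1 (blockEquiv k a) (blockEquiv k b) =
      fromBlocks (QRmat q k).1 (q (k+2) • 1) (-conj (q (k+2)) • 1) (QRmat q k).2 a b ∧
    (QRmat q (k+1)).2 (blockEquiv k a) (blockEquiv k b) =
      fromBlocks (QRmat q k).2 (-q (k+2) • 1) (conj (q (k+2)) • 1) (QRmat q k).1 a b := by
  simp [QRmat]

theorem QRmat_mul (q : ℕ → ℂ) (k : ℕ) :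
    (QRmat q k).1 * (QRmat q k).2 = (∑ j ∈ Icc 1 (k+1), (‖q j‖ : ℂ)^2) • 1 ∧
    (QRmat q k).2 * (QRmat q k).1 = (∑ j ∈ Icc 1 (k+1), (‖q j‖ : ℂ)^2) • 1 := by
  induction k with
  | zero =>
    constructor <;> ext i j <;> fin_cases i <;> fin_cases j <;>
      simp [QRmat, Matrix.mul_apply, Complex.mul_conj', Complex.conj_mul']
  | succ k ih =>
    have hsum : ∑ j ∈ Icc 1 (k+1+1), (‖q j‖ : ℂ)^2 =
        ∑ j ∈ Icc 1 (k+1), (‖q j‖ : ℂ)^2 + q (k+2) * conj (q (k+2)) := by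
      rw [sum_Icc_succ_top (by omega), Complex.mul_conj']
    have hQR := fromBlocks_mul_fromBlocks_eq_smul_one ih.1 ih.2 (q (k+2)) (conj (q (k+2)))
    have hRQ := fromBlocks_mul_fromBlocks_eq_smul_one ih.2 ih.1 (-q (k+2)) (-conj (q (k+2)))
    rw [neg_neg, neg_neg, neg_mul_neg] at hRQ
    have hreindex (c : ℂ) :
        (c • 1 : Matrix _ _ ℂ).submatrix (blockEquiv k).symm (blockEquiv k).symm = c • 1 := by
      rw [submatrix_smul, Pi.smul_apply, Pi.smul_apply, submatrix_one_equiv]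
    simp only [QRmat, reindex_apply, submatrix_mul_equiv, hQR, hRQ, hsum, hreindex, and_self]

theorem QRmat_apply_mem {α β : Type*} (S : Set (α → β → ℂ))
    (hsmul : ∀ c, ∀ f ∈ S, (fun a b => c * f a b) ∈ S)
    (hconj : ∀ f ∈ S, (fun a b => conj (f a b)) ∈ S)
    (q : ℕ → α → β → ℂ) (k : ℕ) (hq : ∀ m ∈ Icc 1 (k+1), q m ∈ S) (i j : Fin (2^k)) :
    (fun a b => (QRmat (fun m => q m a b) k).1 i j) ∈ S ∧
      (fun a b => (QRmat (fun m => q m a b) k).2 i j) ∈ S := by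
  induction k with
  | zero =>
    have hq1 : q 1 ∈ S := hq 1 (by simp)
    exact ⟨hq1, hconj _ hq1⟩
  | succ k ih =>
    have hq' : q (k+2) ∈ S := hq (k+2) (by simp)
    have ih' := ih fun m hm => hq m (Icc_subset_Icc_right (by omega) hm)
    obtain ⟨a, rfl⟩ := (blockEquiv k).surjective i
    obtain ⟨b, rfl⟩ := (blockEquiv k).surjective j
    have hsmul_one_apply (c : ℂ) (a b : Fin (2^k)) :
        (c • 1 : Matrix _ _ ℂ) a b = (1 : Matrix _ _ ℂ) a b * c :=
      mul_comm _ _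
    simp only [QRmat_succ_apply]
    rcases a with a | a <;> rcases b with b | b
    · exact ih' a b
    · simp only [fromBlocks_apply₁₂, hsmul_one_apply, mul_neg, ← neg_mul]
      exact ⟨hsmul _ _ hq', hsmul _ _ hq'⟩
    · simp only [fromBlocks_apply₂₁, hsmul_one_apply, mul_neg, ← neg_mul]
      exact ⟨hsmul _ _ (hconj _ hq'), hsmul _ _ (hconj _ hq')⟩
    · exact (ih' a b).symm

theorem exists_QRmat_fst_apply_eq (k : ℕ) {m : ℕ} (hm : m ∈ Icc 1 (k+1)) :
    ∃ i j : Fin (2^k), ∀ q : ℕ → ℂ, (QRmat q k).1 i j = q m := by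
  induction k with
  | zero =>
    obtain rfl : m = 1 := by simp at hm; omega
    exact ⟨0, 0, fun q => rfl⟩
  | succ k ih =>
    rcases (mem_Icc.mp hm).2.lt_or_eq with hlt | rfl
    · obtain ⟨i, j, hij⟩ := ih (mem_Icc.mpr ⟨(mem_Icc.mp hm).1, by omega⟩)
      exact ⟨blockEquiv k (.inl i), blockEquiv k (.inl j), fun q => by
        simp only [QRmat_succ_apply, fromBlocks_apply₁₁, hij]⟩
    · exact ⟨blockEquiv k (.inl 0), blockEquiv k (.inr 0), fun q => by
        simp [QRmat_succ_apply]⟩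

theorem QRmat_apply_mem_iff {α β : Type*} (S : Set (α → β → ℂ))
    (hsmul : ∀ c, ∀ f ∈ S, (fun a b => c * f a b) ∈ S)
    (hconj : ∀ f ∈ S, (fun a b => conj (f a b)) ∈ S) (q : ℕ → α → β → ℂ) (k : ℕ) :
    (∀ i j : Fin (2^k), (fun a b => (QRmat (fun m => q m a b) k).1 i j) ∈ S ∧
      (fun a b => (QRmat (fun m => q m a b) k).2 i j) ∈ S) ↔ ∀ m ∈ Icc 1 (k+1), q m ∈ S := by
  refine ⟨fun h m hm => ?_, fun hq => QRmat_apply_mem S hsmul hconj q k hq⟩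
  obtain ⟨i, j, hij⟩ := exists_QRmat_fst_apply_eq k hm
  simpa only [hij] using (h i j).1

theorem contDiff_QRmat_apply {N : WithTop ℕ∞} (q : ℕ → ℝ → ℝ → ℂ) (k : ℕ)
    (hq : ∀ m ∈ Icc 1 (k+1), ContDiff ℝ N (uncurry (q m))) (i j : Fin (2^k)) :
    ContDiff ℝ N (uncurry fun x t => (QRmat (fun m => q m x t) k).1 i j) ∧
      ContDiff ℝ N (uncurry fun x t => (QRmat (fun m => q m x t) k).2 i j) :=
  QRmat_apply_mem {f | ContDiff ℝ N (uncurry f)}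
    (fun _ _ (hf : ContDiff ℝ N _) => contDiff_const.mul hf)
    (fun _ (hf : ContDiff ℝ N _) => conjCLE.contDiff.comp hf) q k hq i j

theorem cspOperator_QRmat_apply_eq_zero_iff {σ : ℝ → ℝ → ℂ} (hσ : ∀ x t, conj (σ x t) = σ x t)
    (q : ℕ → ℝ → ℝ → ℂ) (k : ℕ) (x t : ℝ) :
    (∀ i j : Fin (2^k),
      cspOperator σ (fun x t => (QRmat (fun m => q m x t) k).1 i j) x t = 0 ∧
        cspOperator σ (fun x t => (QRmat (fun m => q m x t) k).2 i j) x t = 0) ↔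
      ∀ m ∈ Icc 1 (k+1), cspOperator σ (q m) x t = 0 :=
  QRmat_apply_mem_iff {f | cspOperator σ f x t = 0}
    (fun _ _ (hf : cspOperator σ _ x t = 0) =>
      show cspOperator σ _ x t = 0 by rw [cspOperator_const_mul, hf, mul_zero])
    (fun _ (hf : cspOperator σ _ x t = 0) =>
      show cspOperator σ _ x t = 0 by rw [cspOperator_conj hσ, hf, map_zero]) q k

end QRMatrices

section LaxPair

variable {ι : Type*} [DecidableEq ι]

/-- The Lax matrices `U`, `V` at a point, as functions of the values of `Q`, `R`, `Q_x`, `R_x`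
there. -/
def laxU (lam : ℂ) (Qx Rx : Matrix ι ι ℂ) : Matrix (ι ⊕ ι) (ι ⊕ ι) ℂ :=
  lam • fromBlocks 1 Qx Rx (-1)

noncomputable def laxV [Fintype ι] (lam : ℂ) (Q R Qx Rx : Matrix ι ι ℂ) :
    Matrix (ι ⊕ ι) (ι ⊕ ι) ℂ :=
  fromBlocks (-(lam/2) • (Q * R) - (1/(4*lam)) • 1) (-(lam/2) • (Q * R * Qx) + (1/2 : ℂ) • Q)
    (-(lam/2) • (R * Q * Rx) - (1/2 : ℂ) • R) ((lam/2) • (Q * R) + (1/(4*lam)) • 1)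

theorem laxU_mul_laxV_sub_laxV_mul_laxU [Fintype ι] {lam s sx : ℂ} (hlam : lam ≠ 0)
    {Q R Qx Rx : Matrix ι ι ℂ} (hQR : Q * R = s • 1) (hRQ : R * Q = s • 1)
    (hQRx : Qx * R + Q * Rx = sx • 1) (hRQx : Rx * Q + R * Qx = sx • 1) :
    laxU lam Qx Rx * laxV lam Q R Qx Rx - laxV lam Q R Qx Rx * laxU lam Qx Rx =
      fromBlocks ((-(lam/2) * sx) • 1) (lam • Q + (1/2 : ℂ) • Qx)
        (lam • R - (1/2 : ℂ) • Rx) ((lam/2 * sx) • 1) := by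
  have hQxR : Qx * R = sx • 1 - Q * Rx := eq_sub_of_add_eq hQRx
  have hRxQ : Rx * Q = sx • 1 - R * Qx := eq_sub_of_add_eq hRQx
  rw [laxU, laxV, hQR, hRQ, Matrix.smul_mul, Matrix.mul_smul, fromBlocks_multiply,
    fromBlocks_multiply, fromBlocks_smul, fromBlocks_smul, sub_eq_add_neg, fromBlocks_neg,
    fromBlocks_add, fromBlocks_inj]
  refine ⟨?_, ?_, ?_, ?_⟩ <;>
  · simp only [Matrix.mul_add, Matrix.add_mul, Matrix.mul_sub, Matrix.sub_mul, Matrix.mul_smul,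
      Matrix.smul_mul, Matrix.one_mul, Matrix.mul_one, smul_smul, Matrix.mul_neg,
      Matrix.neg_mul, hQxR, hRxQ]
    match_scalars <;> field_simp <;> ring

theorem pdtM_laxU (lam : ℂ) (Qx Rx : ℝ → ℝ → Matrix ι ι ℂ) (x t : ℝ) :
    pdtM (fun x t => laxU lam (Qx x t) (Rx x t)) x t =
      lam • fromBlocks 0 (pdtM Qx x t) (pdtM Rx x t) 0 := by
  ext (i | i) (j | j) <;> simp [pdtM, laxU, deriv_const_mul_field']

theorem pdxM_laxV [Fintype ι] (lam : ℂ) {σ : ℝ → ℝ → ℂ} {Q R Qx Rx : ℝ → ℝ → Matrix ι ι ℂ}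
    {x t : ℝ} (hQR : ∀ x', Q x' t * R x' t = σ x' t • 1)
    (hRQ : ∀ x', R x' t * Q x' t = σ x' t • 1) (hσ : DifferentiableAt ℝ (fun x' => σ x' t) x)
    (hQ : ∀ i j, DifferentiableAt ℝ (fun x' => Q x' t i j) x)
    (hR : ∀ i j, DifferentiableAt ℝ (fun x' => R x' t i j) x)
    (hQx : ∀ i j, DifferentiableAt ℝ (fun x' => Qx x' t i j) x)
    (hRx : ∀ i j, DifferentiableAt ℝ (fun x' => Rx x' t i j) x) :
    pdxM (fun x t => laxV lam (Q x t) (R x t) (Qx x t) (Rx x t)) x t =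
      fromBlocks (-(lam/2) • pdx σ x t • 1)
        (-(lam/2) • pdxM (fun x t => σ x t • Qx x t) x t + (1/2 : ℂ) • pdxM Q x t)
        (-(lam/2) • pdxM (fun x t => σ x t • Rx x t) x t - (1/2 : ℂ) • pdxM R x t)
        ((lam/2) • pdx σ x t • 1) := by
  have hV (x' : ℝ) : laxV lam (Q x' t) (R x' t) (Qx x' t) (Rx x' t) =
      fromBlocks (-(lam/2) • σ x' t • 1 - (1/(4*lam)) • 1)
        (-(lam/2) • σ x' t • Qx x' t + (1/2 : ℂ) • Q x' t)
        (-(lam/2) • σ x' t • Rx x' t - (1/2 : ℂ) • R x' t)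
        ((lam/2) • σ x' t • 1 + (1/(4*lam)) • 1) := by
    simp only [laxV, hQR, hRQ, Matrix.smul_mul, Matrix.one_mul]
  ext (i | i) (j | j) <;>
    simp only [pdxM, of_apply, hV, fromBlocks_apply₁₁, fromBlocks_apply₁₂, fromBlocks_apply₂₁,
      fromBlocks_apply₂₂, Matrix.smul_apply, Matrix.add_apply, Matrix.sub_apply, smul_eq_mul]
  · exact (((hσ.hasDerivAt.mul_const _).const_mul _).sub_const _).deriv
  · exact (((hσ.mul (hQx i j)).hasDerivAt.const_mul _).add ((hQ i j).hasDerivAt.const_mul _)).deriv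
  · exact (((hσ.mul (hRx i j)).hasDerivAt.const_mul _).sub ((hR i j).hasDerivAt.const_mul _)).deriv
  · exact (((hσ.hasDerivAt.mul_const _).const_mul _).add_const _).deriv

theorem zeroCurvature_laxPair [Fintype ι] {lam : ℂ} (hlam : lam ≠ 0) {σ : ℝ → ℝ → ℂ}
    {Q R : ℝ → ℝ → Matrix ι ι ℂ} (hσ : Differentiable ℝ (uncurry σ))
    (hQ : ∀ i j, ContDiff ℝ 2 (uncurry fun x t => Q x t i j))
    (hR : ∀ i j, ContDiff ℝ 2 (uncurry fun x t => R x t i j))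
    (hQR : ∀ x t, Q x t * R x t = σ x t • 1) (hRQ : ∀ x t, R x t * Q x t = σ x t • 1)
    (x t : ℝ) :
    pdtM (fun x t => laxU lam (pdxM Q x t) (pdxM R x t)) x t
        - pdxM (fun x t => laxV lam (Q x t) (R x t) (pdxM Q x t) (pdxM R x t)) x t
        + laxU lam (pdxM Q x t) (pdxM R x t) * laxV lam (Q x t) (R x t) (pdxM Q x t) (pdxM R x t)
        - laxV lam (Q x t) (R x t) (pdxM Q x t) (pdxM R x t) * laxU lam (pdxM Q x t) (pdxM R x t) =
      lam • fromBlocks 0 (of fun i j => cspOperator σ (fun x t => Q x t i j) x t)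
        (of fun i j => cspOperator σ (fun x t => R x t i j) x t) 0 := by
  have hσx (x t : ℝ) := differentiableAt_slice_left (hσ (x, t))
  have hQx (i j) (x t : ℝ) :=
    differentiableAt_slice_left ((hQ i j).differentiable (by norm_num) (x, t))
  have hRx (i j) (x t : ℝ) :=
    differentiableAt_slice_left ((hR i j).differentiable (by norm_num) (x, t))
  have hQxx (i j) (x t : ℝ) := differentiableAt_slice_left ((hQ i j).differentiable_pdx (x, t))
  have hRxx (i j) (x t : ℝ) := differentiableAt_slice_left ((hR i j).differentiable_pdx (x, t))
  have hQR_x (x t : ℝ) : pdxM Q x t * R x t + Q x t * pdxM R x t = pdx σ x t • 1 := by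
    rw [← pdxM_mul (hQx · · x t) (hRx · · x t), ← pdxM_smul_one]
    exact congrArg (pdxM · x t) (funext₂ hQR)
  have hRQ_x (x t : ℝ) : pdxM R x t * Q x t + R x t * pdxM Q x t = pdx σ x t • 1 := by
    rw [← pdxM_mul (hRx · · x t) (hQx · · x t), ← pdxM_smul_one]
    exact congrArg (pdxM · x t) (funext₂ hRQ)
  rw [pdtM_laxU, pdxM_laxV lam (hQR · t) (hRQ · t) (hσx x t) (hQx · · x t) (hRx · · x t)
      (hQxx · · x t) (hRxx · · x t), add_sub_assoc,
    laxU_mul_laxV_sub_laxV_mul_laxU hlam (hQR x t) (hRQ x t) (hQR_x x t) (hRQ_x x t),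
    of_cspOperator, of_cspOperator, fromBlocks_smul, fromBlocks_smul, sub_eq_add_neg,
    fromBlocks_neg, fromBlocks_add, fromBlocks_add, fromBlocks_inj]
  refine ⟨?_, ?_, ?_, ?_⟩ <;> module

end LaxPair

/-- The zero-curvature equation for the Lax pair of the vector complex short pulse
equation holds at a point iff all `n` component equations hold at that point. -/
theorem vcsp_zero_curvature_iff
    (n : ℕ) (hn : 1 ≤ n)
    (q : ℕ → ℝ → ℝ → ℂ)
    (hq : ∀ i ∈ Finset.Icc 1 n, ContDiff ℝ 2 (fun p : ℝ × ℝ => q i p.1 p.2))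
    (lam : ℂ) (hlam : lam ≠ 0)
    (Q R : ℝ → ℝ → Matrix (Fin (2^(n-1))) (Fin (2^(n-1))) ℂ)
    (hQ : ∀ x t, Q x t = (QRmat (fun i => q i x t) (n-1)).1)
    (hR : ∀ x t, R x t = (QRmat (fun i => q i x t) (n-1)).2)
    (U V : ℝ → ℝ → Matrix (Fin (2^(n-1)) ⊕ Fin (2^(n-1))) (Fin (2^(n-1)) ⊕ Fin (2^(n-1))) ℂ)
    (hU : ∀ x t, U x t = lam • Matrix.fromBlocks
      (1 : Matrix (Fin (2^(n-1))) (Fin (2^(n-1))) ℂ) (pdxM Q x t) (pdxM R x t) (-1))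
    (hV : ∀ x t, V x t = Matrix.fromBlocks
      (-(lam/2) • (Q x t * R x t)
        - (1/(4*lam)) • (1 : Matrix (Fin (2^(n-1))) (Fin (2^(n-1))) ℂ))
      (-(lam/2) • (Q x t * R x t * pdxM Q x t) + (1/2 : ℂ) • Q x t)
      (-(lam/2) • (R x t * Q x t * pdxM R x t) - (1/2 : ℂ) • R x t)
      ((lam/2) • (Q x t * R x t)
        + (1/(4*lam)) • (1 : Matrix (Fin (2^(n-1))) (Fin (2^(n-1))) ℂ))) :
    ∀ x t,
      (pdtM U x t - pdxM V x t + U x t * V x t - V x t * U x t = 0) ↔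
      (∀ i ∈ Finset.Icc 1 n,
        pdt (pdx (q i)) x t + q i x t
          + (1/2) * pdx (fun x' t' =>
              (∑ j ∈ Finset.Icc 1 n, (‖q j x' t'‖ : ℂ)^2)
                * pdx (q i) x' t') x t = 0) := by
  intro x t
  set σ : ℝ → ℝ → ℂ := fun x t => ∑ j ∈ Icc 1 n, (‖q j x t‖ : ℂ)^2
  have hn' : n - 1 + 1 = n := Nat.sub_add_cancel hn
  have hQR (x t : ℝ) : Q x t * R x t = σ x t • 1 := by rw [hQ, hR, (QRmat_mul _ _).1, hn']
  have hRQ (x t : ℝ) : R x t * Q x t = σ x t • 1 := by rw [hQ, hR, (QRmat_mul _ _).2, hn']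
  have hσ : ContDiff ℝ 2 (uncurry σ) := ContDiff.sum fun j hj => by
    convert ofRealCLM.contDiff.comp ((hq j hj).norm_sq ℝ) using 1
    funext p
    simp
  have hσ_real (x t : ℝ) : conj (σ x t) = σ x t := by
    simp only [σ, map_sum, map_pow, conj_ofReal]
  have hsmooth := contDiff_QRmat_apply q (n-1) (by rwa [hn'])
  simp only [← hQ, ← hR] at hsmooth
  have hcsp := cspOperator_QRmat_apply_eq_zero_iff hσ_real q (n-1) x t
  simp only [← hQ, ← hR, hn'] at hcsp
  obtain rfl : U = fun x t => laxU lam (pdxM Q x t) (pdxM R x t) := funext₂ hU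
  obtain rfl : V = fun x t => laxV lam (Q x t) (R x t) (pdxM Q x t) (pdxM R x t) := funext₂ hV
  rw [zeroCurvature_laxPair hlam (hσ.differentiable (by norm_num)) (hsmooth · · |>.1)
      (hsmooth · · |>.2) hQR hRQ, smul_eq_zero, or_iff_right hlam, ← fromBlocks_zero,
    fromBlocks_inj]
  simp only [true_and, and_true, ← Matrix.ext_iff, of_apply, Matrix.zero_apply, ← forall_and]
  exact hcsp
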